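/- arXiv:1404.0421 — 2 statements merged into one kernel-verified Lean document; each statement's English description precedes it below -/
import Mathlib

section
/- Let G = ⊕_{i=1}^∞ ℤ_{p^i} with metric d(x̄,ȳ) = Σ a_i|x_i−y_i|_{p^i}, where the monotone sequence (a_n) of naturals satisfies a_n > 1 + diam(⊕_{i<n}(ℤ_{p^i}, a_i-scaled metric)) and p^n ≥ 2(n+1) for all n. Then las_* G = 0: for every R > 0 there is λ > R with di_{(λ, 2λ)} G ≤ 0. -/
open Metric Set Filter

noncomputable section

/-- Distance between two subsets of a metric space, valued in `ℝ≥0∞`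
(it is `⊤` when one of the sets is empty, matching the convention `inf ∅ = ∞`). -/
def setEDist {X : Type*} [PseudoMetricSpace X] (A B : Set X) : ENNReal :=
  ⨅ a ∈ A, EMetric.infEdist a B

/-- `diLE X lam D n` : the dimension of `X` on the scale `lam` with control `D`
does not exceed `n`, i.e. `X` is covered by `n+1` families of subsets, each family
`lam`-disjoint (distinct members at distance `> lam`) and `D`-uniformly bounded. -/
def diLE (X : Type*) [PseudoMetricSpace X] (lam D : ℝ) (n : ℕ) : Prop :=
  ∃ U : Fin (n + 1) → Set (Set X),
    (∀ i, ∀ A ∈ U i, ∀ B ∈ U i, A ≠ B → ENNReal.ofReal lam < setEDist A B) ∧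
    (∀ i, ∀ A ∈ U i, EMetric.diam A ≤ ENNReal.ofReal D) ∧
    (∀ x : X, ∃ i, ∃ A ∈ U i, x ∈ A)

/-- `lasStarLE X n` : the asymptotic dimension of `X` with linear control is at most `n`. -/
def lasStarLE (X : Type*) [PseudoMetricSpace X] (n : ℕ) : Prop :=
  ∃ c : ℝ, 0 < c ∧ ∀ R : ℝ, ∃ lam : ℝ, R < lam ∧ diLE X lam (c * lam) n

/-- `ANasLE X n` : the asymptotic Assouad–Nagata dimension of `X` is at most `n`. -/
def ANasLE (X : Type*) [PseudoMetricSpace X] (n : ℕ) : Prop :=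
  ∃ c : ℝ, 0 < c ∧ ∃ r₀ : ℝ, ∀ lam : ℝ, r₀ < lam → diLE X lam (c * lam) n

/-- The cyclic word norm on `ℤ/m`: `|z|_m = min(val z, m - val z)`. -/
def cycNorm (m : ℕ) (z : ZMod m) : ℕ := min z.val (m - z.val)

/-- The weighted `ℓ¹` metric on `G = ⊕_{i=1}^∞ ℤ_{p^i}`:
`d(x̄,ȳ) = Σ_i a_i |x_i - y_i|_{p^i}` (here the `i`-th factor, `i : ℕ`, is `ℤ_{p^{i+1}}`). -/
def Gdist (p : ℕ) (a : ℕ → ℕ) (x y : Π₀ i : ℕ, ZMod (p ^ (i + 1))) : ℝ :=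
  ∑ i ∈ (x - y).support, (a i : ℝ) * (cycNorm (p ^ (i + 1)) ((x - y) i) : ℝ)


/-!
Cut `G` along the coordinates `≥ n`: two points with the same tail lie within
`Σ_{i<n} a_i ⌊p^{i+1}/2⌋ < a_n - 1` of each other, while two points with different tails differ
in some coordinate `j ≥ n` and so lie at distance `≥ a_j ≥ a_n`. Hence the tail classes form a
single `(a_n - 1)`-disjoint, `(a_n - 1)`-bounded cover, and `a_n - 1 → ∞`.
-/

theorem diLE_zero_of_fibers {X Y : Type*} [PseudoMetricSpace X] (f : X → Y) {lam μ D : ℝ}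
    (hlam : 0 ≤ lam) (hμ : lam < μ) (hsep : ∀ x y, f x ≠ f y → μ ≤ dist x y)
    (hbdd : ∀ x y, f x = f y → dist x y ≤ D) : diLE X lam D 0 := by
  refine ⟨fun _ => range fun x => f ⁻¹' {f x}, ?_, ?_, fun x => ⟨0, _, ⟨x, rfl⟩, rfl⟩⟩
  · rintro - - ⟨u, rfl⟩ - ⟨w, rfl⟩ hAB
    have huw : f u ≠ f w := fun h => hAB (by simp only [h])
    have hle : ENNReal.ofReal μ ≤ setEDist (f ⁻¹' {f u}) (f ⁻¹' {f w}) := by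
      refine le_iInf₂ fun v hv => le_infEDist.2 fun v' hv' => ?_
      rw [edist_dist]
      refine ENNReal.ofReal_le_ofReal (hsep v v' ?_)
      rwa [mem_preimage.1 hv, mem_preimage.1 hv']
    exact ((ENNReal.ofReal_lt_ofReal_iff (hlam.trans_lt hμ)).2 hμ).trans_le hle
  · rintro - - ⟨u, rfl⟩
    refine ediam_le fun v hv w hw => ?_
    rw [edist_dist]
    exact ENNReal.ofReal_le_ofReal (hbdd v w (by rw [mem_preimage.1 hv, mem_preimage.1 hw]))

section cycNorm

variable {m : ℕ} [NeZero m]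

theorem cycNorm_le_half (z : ZMod m) : cycNorm m z ≤ m / 2 := by
  have := z.val_lt
  unfold cycNorm
  omega

theorem one_le_cycNorm {z : ZMod m} (hz : z ≠ 0) : 1 ≤ cycNorm m z := by
  have := z.val_lt
  have := (ZMod.val_ne_zero z).2 hz
  unfold cycNorm
  omega

end cycNorm

section Gdist

variable {p : ℕ} [NeZero p] (a : ℕ → ℕ) {x y : Π₀ i : ℕ, ZMod (p ^ (i + 1))}

theorem le_Gdist_of_apply_ne {j : ℕ} (h : x j ≠ y j) : (a j : ℝ) ≤ Gdist p a x y := by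
  have hj : (x - y) j ≠ 0 := by rwa [DFinsupp.sub_apply, sub_ne_zero]
  have hnorm : (1 : ℝ) ≤ cycNorm (p ^ (j + 1)) ((x - y) j) := by
    exact_mod_cast one_le_cycNorm hj
  calc (a j : ℝ) ≤ a j * cycNorm (p ^ (j + 1)) ((x - y) j) :=
        le_mul_of_one_le_right (Nat.cast_nonneg _) hnorm
    _ ≤ Gdist p a x y :=
        Finset.single_le_sum (f := fun i => (a i : ℝ) * cycNorm (p ^ (i + 1)) ((x - y) i))
          (fun _ _ => by positivity) (DFinsupp.mem_support_iff.2 hj)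

theorem Gdist_le_of_forall_le_apply_eq {n : ℕ} (h : ∀ i, n ≤ i → x i = y i) :
    Gdist p a x y ≤ ∑ i ∈ Finset.range n, (a i : ℝ) * (p ^ (i + 1) / 2 : ℕ) := by
  have hsupp : (x - y).support ⊆ Finset.range n := fun i hi => by
    by_contra hin
    refine DFinsupp.mem_support_iff.1 hi ?_
    rw [DFinsupp.sub_apply, h i (by simpa using hin), sub_self]
  refine (Finset.sum_le_sum_of_subset_of_nonneg hsupp fun _ _ _ => by positivity).trans ?_
  gcongr with i
  exact_mod_cast cycNorm_le_half _

end Gdist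

theorem add_two_le_of_one_add_sum_lt {p : ℕ} (hp : 1 < p) {a : ℕ → ℕ}
    (ha : ∀ n, 1 + ∑ i ∈ Finset.range n, a i * (p ^ (i + 1) / 2) < a n) (n : ℕ) :
    n + 2 ≤ a n := by
  induction n with
  | zero => simpa [Nat.succ_le_iff] using ha 0
  | succ k ih =>
    have hhalf : 1 ≤ p ^ (k + 1) / 2 :=
      (Nat.one_le_div_iff two_pos).2 ((Nat.le_self_pow k.succ_ne_zero p).trans' hp)
    have hk : a k ≤ ∑ i ∈ Finset.range (k + 1), a i * (p ^ (i + 1) / 2) :=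
      (Nat.le_mul_of_pos_right _ hhalf).trans
        (Finset.single_le_sum (f := fun i => a i * (p ^ (i + 1) / 2))
          (fun _ _ => Nat.zero_le _) (Finset.self_mem_range_succ k))
    have := ha (k + 1)
    omega

theorem stmt11_general (p : ℕ) (hp : p.Prime) (a : ℕ → ℕ) (hmono : Monotone a)
    (ha : ∀ n : ℕ, 1 + ∑ i ∈ Finset.range n, a i * (p ^ (i + 1) / 2) < a n)
    (X : Type*) [MetricSpace X] (e : X ≃ (Π₀ i : ℕ, ZMod (p ^ (i + 1))))
    (he : ∀ x y : X, dist x y = Gdist p a (e x) (e y)) :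
    ∀ R : ℝ, 0 < R → ∃ lam : ℝ, R < lam ∧ diLE X lam (2 * lam) 0 := by
  have : NeZero p := ⟨hp.ne_zero⟩
  intro R _
  set n := ⌈R⌉₊
  have hRn : R ≤ n := Nat.le_ceil R
  have han : (n : ℝ) + 2 ≤ a n := by exact_mod_cast add_two_le_of_one_add_sum_lt hp.one_lt ha n
  have hsum : ∑ i ∈ Finset.range n, (a i : ℝ) * (p ^ (i + 1) / 2 : ℕ) + 1 ≤ a n := by
    exact_mod_cast (ha n).le.trans_eq' (add_comm _ _)
  refine ⟨a n - 1, by linarith, diLE_zero_of_fibers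
    (fun x (j : {j : ℕ // n ≤ j}) => e x j) (μ := a n) (by linarith) (by linarith) ?_ ?_⟩
  · intro x y hxy
    obtain ⟨⟨j, hj⟩, hne⟩ := Function.ne_iff.1 hxy
    rw [he]
    exact (le_Gdist_of_apply_ne a hne).trans' (by exact_mod_cast hmono hj)
  · intro x y hxy
    rw [he]
    have := Gdist_le_of_forall_le_apply_eq a fun i hi => congr_fun hxy ⟨i, hi⟩
    linarith

/-- `las_* G = 0`: for every `R > 0` there is `λ > R` with `di_{(λ,2λ)} G ≤ 0`. -/
theorem stmt11 (p : ℕ) (hp : p.Prime) (a : ℕ → ℕ) (hmono : Monotone a)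
    (ha : ∀ n : ℕ, 1 + ∑ i ∈ Finset.range n, a i * (p ^ (i + 1) / 2) < a n)
    (hpn : ∀ n : ℕ, 2 * (n + 2) ≤ p ^ (n + 1))
    (X : Type*) [MetricSpace X] (e : X ≃ (Π₀ i : ℕ, ZMod (p ^ (i + 1))))
    (he : ∀ x y : X, dist x y = Gdist p a (e x) (e y)) :
    ∀ R : ℝ, 0 < R → ∃ lam : ℝ, R < lam ∧ diLE X lam (2 * lam) 0 :=
  stmt11_general p hp a hmono ha X e he
end
end

section
/- The dimension functions las_* and ANas are invariant under quasi-isometry: if f : X → Y is a quasi-isometry of metric spaces, then las_* X = las_* Y and ANas X = ANas Y. -/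
open Metric Set Filter

noncomputable section

/-- `fdim X c lam = di_{(lam, c·lam)} X ∈ ℕ ∪ {∞}`, the least `n` with
`di_{(lam, c·lam)} X ≤ n`, or `∞` if there is none. -/
def fdim (X : Type*) [PseudoMetricSpace X] (c lam : ℕ) : ℕ∞ :=
  ⨅ n ∈ {n : ℕ | diLE X (lam : ℝ) ((c : ℝ) * (lam : ℝ)) n}, (n : ℕ∞)

/-- The ultralimit of `f : ℕ → ℕ ∪ {∞}` along the ultrafilter `ω`, in the one-point
compactification `ℕ ∪ {∞}`: the unique finite value attained `ω`-a.e., or `∞` if none. -/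
def ulim (ω : Ultrafilter ℕ) (f : ℕ → ℕ∞) : ℕ∞ :=
  open scoped Classical in
  if h : ∃ v : ℕ, {m | f m = (v : ℕ∞)} ∈ ω then ((Classical.choose h : ℕ) : ℕ∞) else ⊤

/-- `las_ω X`, the asymptotic dimension with linear control with respect to the
ultrafilter `ω` : the minimum over `c` of `lim_ω f_c`. -/
def lasOmega (X : Type*) [PseudoMetricSpace X] (ω : Ultrafilter ℕ) : ℕ∞ :=
  ⨅ c : ℕ, ulim ω (fun lam => fdim X c lam)

/-- The asymptotic dimension with linear control of `X` as a value in `ℕ ∪ {∞}`. -/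
def lasStarDim (X : Type*) [PseudoMetricSpace X] : ℕ∞ :=
  ⨅ n ∈ {n : ℕ | lasStarLE X n}, (n : ℕ∞)

/-- The asymptotic Assouad–Nagata dimension of `X` as a value in `ℕ ∪ {∞}`. -/
def ANasDim (X : Type*) [PseudoMetricSpace X] : ℕ∞ :=
  ⨅ n ∈ {n : ℕ | ANasLE X n}, (n : ℕ∞)

/-- A quasi-isometry of metric spaces. -/
def IsQuasiIsometry {X Y : Type*} [PseudoMetricSpace X] [PseudoMetricSpace Y]
    (f : X → Y) : Prop :=
  ∃ L : ℝ, 1 ≤ L ∧ ∃ C : ℝ, 0 ≤ C ∧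
    (∀ x x' : X,
      L⁻¹ * dist x x' - C ≤ dist (f x) (f x') ∧ dist (f x) (f x') ≤ L * dist x x' + C) ∧
    (∀ y : Y, ∃ x : X, dist y (f x) ≤ C)

/-!
A quasi-isometric embedding `f : X → Y` pulls covers back: the preimages of a `μ`-disjoint,
`D`-bounded family lie at distance at least `(μ - C) / L` from each other and are
`L (D + C)`-bounded. Under the affine change of scale `μ = 2 L λ + C` linear control on `Y`
thus becomes linear control on `X`, and since this change of scale and its inverse both tend to
infinity, it preserves "at arbitrarily large scales" (`las_*`) as well as "at all large scales"
(`ANas`). A quasi-inverse, itself a quasi-isometry,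
gives the other direction.
-/

def IsQuasiIsometricEmbedding {X Y : Type*} [PseudoMetricSpace X] [PseudoMetricSpace Y]
    (f : X → Y) (L C : ℝ) : Prop :=
  ∀ x x' : X,
    L⁻¹ * dist x x' - C ≤ dist (f x) (f x') ∧ dist (f x) (f x') ≤ L * dist x x' + C

section QuasiIsometricEmbedding

variable {X Y : Type*} [PseudoMetricSpace X] [PseudoMetricSpace Y] {n : ℕ}

lemma le_setEDist_iff {A B : Set X} {r : ENNReal} :
    r ≤ setEDist A B ↔ ∀ a ∈ A, ∀ b ∈ B, r ≤ edist a b := by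
  simp only [setEDist, le_iInf_iff]
  exact forall₂_congr fun a _ => le_infEDist

lemma setEDist_le_edist {A B : Set X} {a b : X} (ha : a ∈ A) (hb : b ∈ B) :
    setEDist A B ≤ edist a b :=
  le_setEDist_iff.mp le_rfl a ha b hb

lemma IsQuasiIsometricEmbedding.dist_le {f : X → Y} {L C : ℝ}
    (hf : IsQuasiIsometricEmbedding f L C) (hL : 0 < L) (x x' : X) :
    dist x x' ≤ L * (dist (f x) (f x') + C) :=
  (inv_mul_le_iff₀ hL).mp (by linarith [(hf x x').1])

lemma diLE.mono {lam D D' : ℝ} (hD : D ≤ D') (h : diLE X lam D n) : diLE X lam D' n := by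
  obtain ⟨U, hsep, hbdd, hcov⟩ := h
  exact ⟨U, hsep, fun i A hA => (hbdd i A hA).trans (ENNReal.ofReal_le_ofReal hD), hcov⟩

lemma diLE.of_isQuasiIsometricEmbedding {f : X → Y} {L C lam mu D : ℝ}
    (hf : IsQuasiIsometricEmbedding f L C) (hL : 0 < L) (hlam : 0 ≤ lam)
    (hmu : L * lam + C < mu) (hD : 0 ≤ D) (h : diLE Y mu D n) :
    diLE X lam (L * (D + C)) n := by
  obtain ⟨U, hsep, hbdd, hcov⟩ := h
  refine ⟨fun i => (f ⁻¹' ·) '' U i, ?_, ?_, fun x => ?_⟩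
  · rintro i _ ⟨A, hA, rfl⟩ _ ⟨B, hB, rfl⟩ hne
    have hAB : A ≠ B := by rintro rfl; exact hne rfl
    have hsep' : ENNReal.ofReal ((mu - C) / L) ≤ setEDist (f ⁻¹' A) (f ⁻¹' B) := by
      refine le_setEDist_iff.mpr fun a ha b hb => ?_
      have hfab : mu < dist (f a) (f b) := by
        have := (hsep i A hA B hB hAB).trans_le (setEDist_le_edist ha hb)
        rw [edist_dist, ENNReal.ofReal_lt_ofReal_iff'] at this
        exact this.1
      rw [edist_dist]
      refine ENNReal.ofReal_le_ofReal ((div_le_iff₀ hL).mpr ?_)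
      linarith [(hf a b).2]
    have hlam' : lam < (mu - C) / L := by rw [lt_div_iff₀ hL]; linarith
    exact ((ENNReal.ofReal_lt_ofReal_iff (hlam.trans_lt hlam')).mpr hlam').trans_le hsep'
  · rintro i _ ⟨A, hA, rfl⟩
    refine Metric.ediam_le fun a ha b hb => ?_
    have hfab : dist (f a) (f b) ≤ D :=
      (edist_le_ofReal hD).mp
        ((Metric.edist_le_ediam_of_mem (show f a ∈ A from ha) hb).trans (hbdd i A hA))
    rw [edist_dist]
    exact ENNReal.ofReal_le_ofReal ((hf.dist_le hL a b).trans (by gcongr))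
  · obtain ⟨i, A, hA, hx⟩ := hcov (f x)
    exact ⟨i, _, ⟨A, hA, rfl⟩, hx⟩

lemma diLE.linear_of_isQuasiIsometricEmbedding {f : X → Y} {L C c lam : ℝ}
    (hf : IsQuasiIsometricEmbedding f L C) (hL : 1 ≤ L) (hC : 0 ≤ C) (hc : 0 ≤ c)
    (hlam : 1 ≤ lam) (h : diLE Y (2 * L * lam + C) (c * (2 * L * lam + C)) n) :
    diLE X lam (L * (c * (2 * L + C) + C) * lam) n := by
  refine (h.of_isQuasiIsometricEmbedding hf (by positivity) (by positivity) (by nlinarith)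
    (by positivity)).mono ?_
  have : 0 ≤ L * C * (c + 1) := by positivity
  nlinarith

lemma lasStarLE_iff_frequently :
    lasStarLE X n ↔ ∃ c : ℝ, 0 < c ∧ ∃ᶠ lam in atTop, diLE X lam (c * lam) n := by
  simp only [lasStarLE, frequently_atTop', gt_iff_lt]

lemma ANasLE_iff_eventually :
    ANasLE X n ↔ ∃ c : ℝ, 0 < c ∧ ∀ᶠ lam in atTop, diLE X lam (c * lam) n := by
  simp only [ANasLE, (atTop_basis_Ioi).eventually_iff, true_and, mem_Ioi]

lemma IsQuasiIsometricEmbedding.lasStarLE {f : X → Y} {L C : ℝ}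
    (hf : IsQuasiIsometricEmbedding f L C) (hL : 1 ≤ L) (hC : 0 ≤ C) (h : lasStarLE Y n) :
    lasStarLE X n := by
  rw [lasStarLE_iff_frequently] at h ⊢
  obtain ⟨c, hc, h⟩ := h
  have hL0 : 0 < L := by linarith
  refine ⟨L * (c * (2 * L + C) + C), by positivity, ?_⟩
  have hscale : Tendsto (fun mu => (mu - C) / (2 * L)) atTop atTop :=
    (tendsto_atTop_add_const_right _ (-C) tendsto_id).atTop_div_const (by positivity)
  refine hscale.frequently ((h.and_eventually (hscale.eventually_ge_atTop 1)).mono ?_)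
  rintro mu ⟨hmu, hone⟩
  refine diLE.linear_of_isQuasiIsometricEmbedding hf hL hC hc.le hone ?_
  have : 2 * L * ((mu - C) / (2 * L)) + C = mu := by field_simp; ring
  rwa [this]

lemma IsQuasiIsometricEmbedding.ANasLE {f : X → Y} {L C : ℝ}
    (hf : IsQuasiIsometricEmbedding f L C) (hL : 1 ≤ L) (hC : 0 ≤ C) (h : ANasLE Y n) :
    ANasLE X n := by
  rw [ANasLE_iff_eventually] at h ⊢
  obtain ⟨c, hc, h⟩ := h
  have hL0 : 0 < L := by linarith
  refine ⟨L * (c * (2 * L + C) + C), by positivity, ?_⟩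
  have hscale : Tendsto (fun lam => 2 * L * lam + C) atTop atTop :=
    tendsto_atTop_add_const_right _ C (tendsto_id.const_mul_atTop (by positivity))
  filter_upwards [hscale.eventually h, eventually_ge_atTop 1] with lam hmu hone
  exact diLE.linear_of_isQuasiIsometricEmbedding hf hL hC hc.le hone hmu

end QuasiIsometricEmbedding

namespace IsQuasiIsometry

variable {X Y : Type*} [PseudoMetricSpace X] [PseudoMetricSpace Y] {f : X → Y}

lemma exists_quasiInverse (hf : IsQuasiIsometry f) : ∃ g : Y → X, IsQuasiIsometry g := by
  obtain ⟨L, hL, C, hC, (hfLC : IsQuasiIsometricEmbedding f L C), hsurj⟩ := hf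
  choose g hg using hsurj
  have hL0 : 0 < L := by linarith
  refine ⟨g, L, hL, 3 * L * C, by positivity, fun y y' => ⟨?_, ?_⟩, fun x => ⟨f x, ?_⟩⟩
  · have hyy' : dist y y' ≤ L * dist (g y) (g y') + 3 * C := by
      linarith [dist_triangle4 y (f (g y)) (f (g y')) y', (hfLC (g y) (g y')).2, hg y, hg y',
        dist_comm y' (f (g y'))]
    have : C ≤ L * (L * C) :=
      (le_mul_of_one_le_left hC hL).trans (le_mul_of_one_le_left (by positivity) hL)
    rw [sub_le_iff_le_add, inv_mul_le_iff₀ hL0]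
    nlinarith
  · have hfg : dist (f (g y)) (f (g y')) ≤ dist y y' + 2 * C := by
      linarith [dist_triangle4 (f (g y)) y y' (f (g y')), hg y, hg y',
        dist_comm y (f (g y)), dist_comm y' (f (g y'))]
    calc dist (g y) (g y') ≤ L * (dist (f (g y)) (f (g y')) + C) := hfLC.dist_le hL0 _ _
      _ ≤ L * (dist y y' + 3 * C) := mul_le_mul_of_nonneg_left (by linarith) hL0.le
      _ = L * dist y y' + 3 * L * C := by ring
  · calc dist x (g (f x)) ≤ L * (dist (f x) (f (g (f x))) + C) := hfLC.dist_le hL0 _ _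
      _ ≤ L * (C + C) := by gcongr; exact hg (f x)
      _ ≤ 3 * L * C := by nlinarith

lemma lasStarLE_iff (hf : IsQuasiIsometry f) {n : ℕ} : lasStarLE X n ↔ lasStarLE Y n := by
  obtain ⟨g, L', hL', C', hC', (hg : IsQuasiIsometricEmbedding g L' C'), -⟩ :=
    hf.exists_quasiInverse
  obtain ⟨L, hL, C, hC, (hf : IsQuasiIsometricEmbedding f L C), -⟩ := hf
  exact ⟨hg.lasStarLE hL' hC', hf.lasStarLE hL hC⟩

lemma ANasLE_iff (hf : IsQuasiIsometry f) {n : ℕ} : ANasLE X n ↔ ANasLE Y n := by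
  obtain ⟨g, L', hL', C', hC', (hg : IsQuasiIsometricEmbedding g L' C'), -⟩ :=
    hf.exists_quasiInverse
  obtain ⟨L, hL, C, hC, (hf : IsQuasiIsometricEmbedding f L C), -⟩ := hf
  exact ⟨hg.ANasLE hL' hC', hf.ANasLE hL hC⟩

end IsQuasiIsometry

/-- `las_*` and `ANas` are quasi-isometry invariants. -/
theorem stmt19 {X Y : Type*} [MetricSpace X] [MetricSpace Y] (f : X → Y)
    (hf : IsQuasiIsometry f) :
    lasStarDim X = lasStarDim Y ∧ ANasDim X = ANasDim Y := by
  simp only [lasStarDim, ANasDim, hf.lasStarLE_iff, hf.ANasLE_iff, and_self]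
end
end
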